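/- Consider the Recursive Walk: ADDRESS(i,σ) moves to τ ∈ A(i,σ), then while some flaw in U(τ) ∩ Γ_R(f_i) is present, recursively calls ADDRESS on the greatest such flaw. If the invocation ADDRESS(i,σ) returns at state τ, then U(τ) ⊆ U(σ) ∖ (Γ_R(f_i) ∪ {f_i}), i.e., every flaw present at τ was present at σ and lies outside Γ_R(f_i) ∪ {f_i}. -/

import Mathlib

universe u v

mutual
  /-- `RecAddr f A Γ i σ τ` models an invocation `ADDRESS(i,σ)` of the Recursive Walk that
  returns at state `τ`: it moves to some `τ₀ ∈ A i σ` and then, while some flaw of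
  `Γ(f_i)` is present, recursively addresses the greatest such flaw. -/
  inductive RecAddr {ι : Type u} {Ω : Type v} [LinearOrder ι]
      (f : ι → Set Ω) (A : ι → Ω → Set Ω) (Γ : ι → Set ι) : ι → Ω → Ω → Prop
    | step {i : ι} {σ τ₀ τ : Ω} : σ ∈ f i → τ₀ ∈ A i σ →
        RecLoop f A Γ i τ₀ τ → RecAddr f A Γ i σ τ
  /-- The while-loop of `ADDRESS(i,·)`: from state `σ` it returns `σ` if no flaw of
  `Γ i` is present, and otherwise recursively addresses the greatest present flaw of
  `Γ i` and continues. -/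
  inductive RecLoop {ι : Type u} {Ω : Type v} [LinearOrder ι]
      (f : ι → Set Ω) (A : ι → Ω → Set Ω) (Γ : ι → Set ι) : ι → Ω → Ω → Prop
    | done {i : ι} {σ : Ω} : (∀ j, σ ∈ f j → j ∉ Γ i) → RecLoop f A Γ i σ σ
    | more {i j : ι} {σ σ' τ : Ω} : σ ∈ f j → j ∈ Γ i →
        (∀ k, σ ∈ f k → k ∈ Γ i → k ≤ j) →
        RecAddr f A Γ j σ σ' → RecLoop f A Γ i σ' τ → RecLoop f A Γ i σ τ
end

/-!
Every flaw present when `ADDRESS(i,σ)` returns is outside `Γ(f_i)`, since the while-loop only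
exits once no flaw of `Γ(f_i)` is present. A flaw outside `Γ(f_i)` cannot be caused by
addressing `f_i`, so it was already present before the first transition and is not `f_i`
itself. Flaws present at the end of a recursive call were present at its start, so this
propagates back through the loop.
-/

section

variable {ι : Type u} {Ω : Type v} {f : ι → Set Ω} {A : ι → Ω → Set Ω} {Γ : ι → Set ι}

theorem mem_and_ne_of_transition_of_notMem
    (hC : ∀ i σ τ, σ ∈ f i → τ ∈ A i σ → ∀ j, τ ∈ f j → (j = i ∨ σ ∉ f j) → j ∈ Γ i)
    {i j : ι} {σ τ : Ω} (hσ : σ ∈ f i) (hτ : τ ∈ A i σ) (hj : τ ∈ f j) (hjΓ : j ∉ Γ i) :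
    σ ∈ f j ∧ j ≠ i := by
  by_contra! hcaused
  exact hjΓ (hC i σ τ hσ hτ j hj (imp_iff_not_or.mp hcaused).symm)

theorem flaws_of_step_of_loop
    (hC : ∀ i σ τ, σ ∈ f i → τ ∈ A i σ → ∀ j, τ ∈ f j → (j = i ∨ σ ∉ f j) → j ∈ Γ i)
    {i : ι} {σ τ₀ τ : Ω} (hσ : σ ∈ f i) (hτ₀ : τ₀ ∈ A i σ)
    (hloop : ∀ j, τ ∈ f j → τ₀ ∈ f j ∧ j ∉ Γ i) :
    ∀ j, τ ∈ f j → σ ∈ f j ∧ j ∉ Γ i ∧ j ≠ i := by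
  intro j hj
  obtain ⟨hj₀, hjΓ⟩ := hloop j hj
  obtain ⟨hσj, hji⟩ := mem_and_ne_of_transition_of_notMem hC hσ hτ₀ hj₀ hjΓ
  exact ⟨hσj, hjΓ, hji⟩

theorem RecLoop.flaws_subset [LinearOrder ι]
    (hC : ∀ i σ τ, σ ∈ f i → τ ∈ A i σ → ∀ j, τ ∈ f j → (j = i ∨ σ ∉ f j) → j ∈ Γ i)
    {i : ι} {σ τ : Ω} (h : RecLoop f A Γ i σ τ) :
    ∀ j, τ ∈ f j → σ ∈ f j ∧ j ∉ Γ i := by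
  -- The loop's recursive calls need the claim for `RecAddr`, so it is proved simultaneously.
  induction h using RecLoop.rec
    (motive_1 := fun i σ τ _ => ∀ j, τ ∈ f j → σ ∈ f j ∧ j ∉ Γ i ∧ j ≠ i) with
  | step hσ hτ₀ _ ih j hj => exact flaws_of_step_of_loop hC hσ hτ₀ ih j hj
  | done hclear => exact fun j hj => ⟨hj, hclear j hj⟩
  | more _ _ _ _ _ ihCall ihLoop =>
    intro k hk
    obtain ⟨hk', hkΓ⟩ := ihLoop k hk
    exact ⟨(ihCall k hk').1, hkΓ⟩

end

/-- If `Γ ⊇` the (potential) causality digraph — i.e. whenever a transition addressing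
`f i` leads from `σ` to `τ` and `f j` is present at `τ` with `j = i` or `f j` absent at
`σ`, then `j ∈ Γ i` — and the invocation `ADDRESS(i,σ)` returns at `τ`, then every flaw
present at `τ` was present at `σ` and lies outside `Γ(f_i) ∪ {f_i}`. -/
theorem stmt_11 {ι : Type u} {Ω : Type v} [LinearOrder ι]
    (f : ι → Set Ω) (A : ι → Ω → Set Ω) (Γ : ι → Set ι)
    (hC : ∀ i σ τ, σ ∈ f i → τ ∈ A i σ → ∀ j, τ ∈ f j → (j = i ∨ σ ∉ f j) → j ∈ Γ i)
    {i : ι} {σ τ : Ω} (h : RecAddr f A Γ i σ τ) :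
    ∀ j, τ ∈ f j → σ ∈ f j ∧ j ∉ Γ i ∧ j ≠ i := by
  obtain ⟨hσ, hτ₀, hloop⟩ := h
  exact flaws_of_step_of_loop hC hσ hτ₀ (hloop.flaws_subset hC)
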